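/- Let x be a strategy profile of a multi-leader congestion game with an adversary, let i be a player and s a resource with s ≠ x_i, and let x' = (s, x_{−i}) be the profile obtained after player i deviates from x_i to s. Let j be a player with x_j ∉ {x_i, s}, and let r be a resource with r ≠ x_i and r ≠ x_j. Write M = M(x). Then player j's deviation cost for r strictly decreases, i.e., π_j(r, x'_{−j}) < π_j(r, x_{−j}), if and only if r ≠ s and one of the following four cases holds: (i) ℓ_s(x) = M and ℓ_r(x) ∈ {M, M − 1}; (ii) ℓ_{x_i}(x) ≤ M − 1, ℓ_s(x) = M − 1, and ℓ_r(x) = M − 1; (iii) ℓ_{x_i}(x) ≤ M − 1, ℓ_s(x) = M − 1, ℓ_r(x) = M − 2, and x_j is the only resource with load M in x; (iv) ℓ_{x_i}(x) ≤ M − 2, ℓ_s(x) = M − 2, ℓ_r(x) = M − 2, and x_j is the only resource with load M in x. -/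
import Mathlib


open Finset

variable {ι : Type*} {m : ℕ}

/-- The load of resource `r` under strategy profile `x`. -/
def load [Fintype ι] [DecidableEq ι] (x : ι → Fin m) (r : Fin m) : ℕ :=
  (Finset.univ.filter (fun i => x i = r)).card

/-- The maximum load `M(x)`. -/
def maxLoad [Fintype ι] [DecidableEq ι] (x : ι → Fin m) : ℕ :=
  Finset.univ.sup (fun r => load x r)

/-- The number `p(x)` of resources with maximum load. -/
def numMax [Fintype ι] [DecidableEq ι] (x : ι → Fin m) : ℕ :=
  (Finset.univ.filter (fun r => load x r = maxLoad x)).card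

/-- The attack term `κ*_r(x)`. -/
noncomputable def kappa [Fintype ι] [DecidableEq ι] (B : ℝ) (x : ι → Fin m) (r : Fin m) : ℝ :=
  if load x r = maxLoad x then B / (numMax x : ℝ) else 0

/-- The cost `c_r(x)` of resource `r` under profile `x`. -/
noncomputable def rcost [Fintype ι] [DecidableEq ι] (a : Fin m → ℝ) (B : ℝ)
    (x : ι → Fin m) (r : Fin m) : ℝ :=
  a r * (load x r : ℝ) + kappa B x r

/-- The private cost `π_i(x)` of player `i` under profile `x`. -/
noncomputable def pcost [Fintype ι] [DecidableEq ι] (a : Fin m → ℝ) (B : ℝ)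
    (x : ι → Fin m) (i : ι) : ℝ :=
  rcost a B x (x i)

/-- `x` is an `α`-approximate pure Nash equilibrium. -/
def isApproxPNE [Fintype ι] [DecidableEq ι] (a : Fin m → ℝ) (B : ℝ) (α : ℝ)
    (x : ι → Fin m) : Prop :=
  ∀ (i : ι) (r : Fin m), pcost a B x i ≤ α * pcost a B (Function.update x i r) i

/-- `r` is the only resource with maximum load in `x`. -/
def onlyMax [Fintype ι] [DecidableEq ι] (x : ι → Fin m) (r : Fin m) : Prop :=
  load x r = maxLoad x ∧ ∀ s : Fin m, load x s = maxLoad x → s = r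


variable [Fintype ι] [DecidableEq ι]

lemma load_update_of_ne (x : ι → Fin m) (k : ι) (t u : Fin m)
    (h1 : u ≠ t) (h2 : u ≠ x k) : load (Function.update x k t) u = load x u := by
  unfold load
  congr 1
  ext p
  simp only [mem_filter, mem_univ, true_and]
  by_cases hp : p = k
  · subst hp; simp [Function.update_self, h1.symm, h2.symm]
  · simp [Function.update_of_ne hp]

lemma load_update_self (x : ι → Fin m) (k : ι) (t : Fin m)
    (h : x k ≠ t) : load (Function.update x k t) t = load x t + 1 := by
  unfold load
  have : (Finset.univ.filter (fun p => Function.update x k t p = t))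
      = insert k (Finset.univ.filter (fun p => x p = t)) := by
    ext p
    simp only [mem_filter, mem_univ, true_and, mem_insert]
    by_cases hp : p = k
    · subst hp; simp [Function.update_self]
    · simp [Function.update_of_ne hp, hp]
  rw [this, card_insert_of_notMem (by simp [h])]

lemma load_update_old (x : ι → Fin m) (k : ι) (t : Fin m)
    (h : x k ≠ t) : load (Function.update x k t) (x k) + 1 = load x (x k) := by
  unfold load
  have : (Finset.univ.filter (fun p => Function.update x k t p = x k))
      = (Finset.univ.filter (fun p => x p = x k)).erase k := by
    ext p
    simp only [mem_filter, mem_univ, true_and, mem_erase]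
    by_cases hp : p = k
    · subst hp; simp [Function.update_self, h, Ne.symm h]
    · simp [Function.update_of_ne hp, hp]
  rw [this, card_erase_of_mem (by simp)]
  have : 1 ≤ (Finset.univ.filter (fun p => x p = x k)).card :=
    card_pos.mpr ⟨k, by simp⟩
  omega

lemma load_le_maxLoad (x : ι → Fin m) (t : Fin m) : load x t ≤ maxLoad x :=
  Finset.le_sup (mem_univ t)

lemma maxLoad_eq_of (x : ι → Fin m) (V : ℕ) (hub : ∀ t, load x t ≤ V)
    (hex : ∃ t, load x t = V) : maxLoad x = V := by
  obtain ⟨t, ht⟩ := hex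
  exact le_antisymm (Finset.sup_le fun u _ => hub u) (ht ▸ load_le_maxLoad x t)

lemma exists_maxLoad (x : ι → Fin m) (t0 : Fin m) : ∃ t, load x t = maxLoad x := by
  obtain ⟨t, _, ht⟩ := Finset.exists_mem_eq_sup Finset.univ ⟨t0, mem_univ t0⟩ (fun r => load x r)
  exact ⟨t, ht.symm⟩

lemma one_le_load_self (x : ι → Fin m) (k : ι) : 1 ≤ load x (x k) :=
  card_pos.mpr ⟨k, by simp⟩

lemma kappa_nonneg (B : ℝ) (hB : 0 < B) (x : ι → Fin m) (t : Fin m) :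
    0 ≤ kappa B x t := by
  unfold kappa
  split
  · positivity
  · exact le_refl 0

lemma Bdiv_lt_Bdiv_iff (B : ℝ) (hB : 0 < B) {p q : ℕ} (hp : 0 < p) (hq : 0 < q) :
    B / (p : ℝ) < B / (q : ℝ) ↔ q < p := by
  rw [div_lt_div_iff_of_pos_left hB (by exact_mod_cast hp) (by exact_mod_cast hq)]
  exact_mod_cast Iff.rfl

lemma Bdiv_pos (B : ℝ) (hB : 0 < B) {p : ℕ} (hp : 0 < p) : 0 < B / (p : ℝ) := by
  have : (0:ℝ) < p := by exact_mod_cast hp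
  positivity

lemma one_le_numMax (x : ι → Fin m) (t0 : Fin m) : 1 ≤ numMax x := by
  obtain ⟨t, ht⟩ := exists_maxLoad x t0
  exact card_pos.mpr ⟨t, by simp [ht]⟩

lemma kappa_eq_div (B : ℝ) (z : ι → Fin m) (t : Fin m) {V p : ℕ}
    (hV : maxLoad z = V) (ht : load z t = V)
    (hp : (Finset.univ.filter (fun u => load z u = V)).card = p) :
    kappa B z t = B / (p : ℝ) := by
  unfold kappa numMax
  rw [hV, if_pos ht, hp]

lemma kappa_eq_zero (B : ℝ) (z : ι → Fin m) (t : Fin m) {V : ℕ}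
    (hV : maxLoad z = V) (ht : load z t ≠ V) : kappa B z t = 0 := by
  unfold kappa
  rw [hV, if_neg ht]

/-- characterization of when player j's deviation cost for a
resource r strictly decreases after player i deviates from x_i to s. -/
theorem deviation_cost_decrease_iff (n m : ℕ) (a : Fin m → ℝ) (ha : ∀ r, 0 ≤ a r)
    (B : ℝ) (hB : 0 < B) (x : Fin n → Fin m)
    (i : Fin n) (s : Fin m) (hs : s ≠ x i)
    (j : Fin n) (hj1 : x j ≠ x i) (hj2 : x j ≠ s)
    (r : Fin m) (hri : r ≠ x i) (hrj : r ≠ x j) :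
    pcost a B (Function.update (Function.update x i s) j r) j <
        pcost a B (Function.update x j r) j ↔
      (r ≠ s ∧
        ((load x s = maxLoad x ∧
            (load x r = maxLoad x ∨ load x r + 1 = maxLoad x)) ∨
         (load x (x i) < maxLoad x ∧ load x s + 1 = maxLoad x ∧
            load x r + 1 = maxLoad x) ∨
         (load x (x i) < maxLoad x ∧ load x s + 1 = maxLoad x ∧
            load x r + 2 = maxLoad x ∧ onlyMax x (x j)) ∨
         (load x (x i) + 2 ≤ maxLoad x ∧ load x s + 2 = maxLoad x ∧
            load x r + 2 = maxLoad x ∧ onlyMax x (x j)))) := by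
  have hij : i ≠ j := fun h => hj1 (congrArg x h.symm)
  have hji : j ≠ i := Ne.symm hij
  by_cases hrs : r = s
  · -- r = s : no strict decrease
    subst hrs
    refine iff_of_false ?_ (by rintro ⟨h, -⟩; exact h rfl)
    have hcomm : Function.update (Function.update x i r) j r
        = Function.update (Function.update x j r) i r := Function.update_comm hij r r x
    rw [hcomm]
    set z := Function.update x j r with hz
    set w := Function.update z i r with hw
    simp only [pcost, rcost]
    have hzj : z j = r := by rw [hz]; exact Function.update_self j r x
    have hwj : w j = r := by rw [hw, Function.update_of_ne hji, hzj]
    rw [hzj, hwj]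
    apply not_lt.mpr
    have hzi : z i = x i := by rw [hz]; exact Function.update_of_ne hij r x
    have hzir : z i ≠ r := by rw [hzi]; exact Ne.symm hri
    have hwr : load w r = load z r + 1 := load_update_self z i r hzir
    have hwi : load w (z i) + 1 = load z (z i) := load_update_old z i r hzir
    have hwt : ∀ t, t ≠ r → t ≠ z i → load w t = load z t :=
      fun t h1 h2 => load_update_of_ne z i r t h1 h2
    have haterm : a r * ((load z r : ℕ) : ℝ) ≤ a r * ((load z r + 1 : ℕ) : ℝ) := by
      apply mul_le_mul_of_nonneg_left _ (ha r)
      exact_mod_cast Nat.le_succ _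
    have hub : ∀ t, load w t ≤ maxLoad z + 1 := by
      intro t
      by_cases h1 : t = r
      · subst h1
        have := load_le_maxLoad z t
        omega
      · by_cases h2 : t = z i
        · rw [h2]
          have := load_le_maxLoad z (z i)
          omega
        · rw [hwt t h1 h2]
          have := load_le_maxLoad z t
          omega
    have hkap : kappa B z r ≤ kappa B w r := by
      by_cases hmax : load z r = maxLoad z
      · have hMw : maxLoad w = maxLoad z + 1 := maxLoad_eq_of _ _ hub ⟨r, by omega⟩
        have hfw : Finset.univ.filter (fun t => load w t = maxLoad z + 1) = {r} := by
          ext t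
          simp only [mem_filter, mem_univ, true_and, mem_singleton]
          by_cases h1 : t = r
          · subst h1; simp only [iff_true]; omega
          · simp only [h1, iff_false]
            by_cases h2 : t = z i
            · rw [h2]
              have := load_le_maxLoad z (z i)
              omega
            · rw [hwt t h1 h2]
              have := load_le_maxLoad z t
              omega
        have hkw : kappa B w r = B / ((1:ℕ) : ℝ) :=
          kappa_eq_div B w r hMw (by omega) (by rw [hfw]; simp)
        have hkz : kappa B z r = B / (numMax z : ℝ) := by
          unfold kappa; rw [if_pos hmax]
        rw [hkz, hkw]
        have h1 : 1 ≤ numMax z := one_le_numMax z r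
        refine le_of_not_gt fun hlt => ?_
        rw [Bdiv_lt_Bdiv_iff B hB one_pos (by omega)] at hlt
        omega
      · have hkz : kappa B z r = 0 := if_neg hmax
        rw [hkz]
        exact kappa_nonneg B hB w r
    rw [hwr]
    exact add_le_add haterm hkap
  · -- r ≠ s
    set x' := Function.update x i s with hx'def
    set y' := Function.update x' j r with hy'def
    set y := Function.update x j r with hydef
    have hxj_r : x j ≠ r := Ne.symm hrj
    have hx'j : x' j = x j := Function.update_of_ne hji s x
    have hx'j_r : x' j ≠ r := by rw [hx'j]; exact hxj_r
    have hx'i : x i ≠ s := Ne.symm hs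
    have hx't : ∀ t, t ≠ s → t ≠ x i → load x' t = load x t :=
      fun t h1 h2 => load_update_of_ne x i s t h1 h2
    -- loads of y
    have hyr : load y r = load x r + 1 := load_update_self x j r hxj_r
    have hyj : load y (x j) + 1 = load x (x j) := load_update_old x j r hxj_r
    have hyt : ∀ t, t ≠ r → t ≠ x j → load y t = load x t :=
      fun t h1 h2 => load_update_of_ne x j r t h1 h2
    -- loads of y'
    have hy'r : load y' r = load x r + 1 := by
      rw [hy'def, load_update_self x' j r hx'j_r, hx't r hrs hri]
    have hy's : load y' s = load x s + 1 := by
      rw [hy'def, load_update_of_ne x' j r s (Ne.symm hrs) (by rw [hx'j]; exact Ne.symm hj2),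
        hx'def, load_update_self x i s hx'i]
    have hy'i : load y' (x i) + 1 = load x (x i) := by
      rw [hy'def, load_update_of_ne x' j r (x i) (Ne.symm hri) (by rw [hx'j]; exact Ne.symm hj1)]
      exact load_update_old x i s hx'i
    have hy'j : load y' (x j) + 1 = load x (x j) := by
      have h := load_update_old x' j r hx'j_r
      rw [hx'j] at h
      rw [← hy'def] at h
      rw [h, hx't (x j) hj2 hj1]
    have hy't : ∀ t, t ≠ r → t ≠ s → t ≠ x i → t ≠ x j → load y' t = load x t := by
      intro t h1 h2 h3 h4
      rw [hy'def, load_update_of_ne x' j r t h1 (by rw [hx'j]; exact h4), hx't t h2 h3]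
    -- reduce goal to kappa comparison
    have hyjj : y j = r := by rw [hydef]; exact Function.update_self j r x
    have hy'jj : y' j = r := by rw [hy'def]; exact Function.update_self j r x'
    simp only [pcost, rcost]
    rw [hyjj, hy'jj, hyr, hy'r, add_lt_add_iff_left, and_iff_right hrs]
    -- global bounds
    have hLrM : load x r ≤ maxLoad x := load_le_maxLoad x r
    have hLsM : load x s ≤ maxLoad x := load_le_maxLoad x s
    have hLiM : load x (x i) ≤ maxLoad x := load_le_maxLoad x (x i)
    have hLjM : load x (x j) ≤ maxLoad x := load_le_maxLoad x (x j)
    have hLi1 : 1 ≤ load x (x i) := one_le_load_self x i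
    have hLj1 : 1 ≤ load x (x j) := one_le_load_self x j
    by_cases hA : load x r = maxLoad x
    · -- Branch A : load x r = M
      have hMy : maxLoad y = maxLoad x + 1 := by
        apply maxLoad_eq_of
        · intro t
          by_cases h1 : t = r
          · rw [h1]; omega
          · by_cases h2 : t = x j
            · rw [h2]; omega
            · rw [hyt t h1 h2]
              have := load_le_maxLoad x t
              omega
        · exact ⟨r, by omega⟩
      have hky : kappa B y r = B / ((1:ℕ) : ℝ) := by
        apply kappa_eq_div B y r hMy (by omega)
        have hfy : Finset.univ.filter (fun t => load y t = maxLoad x + 1) = {r} := by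
          ext t
          simp only [mem_filter, mem_univ, true_and, mem_singleton]
          constructor
          · intro ht
            by_contra h1
            by_cases h2 : t = x j
            · rw [h2] at ht; omega
            · rw [hyt t h1 h2] at ht
              have := load_le_maxLoad x t
              omega
          · rintro rfl; omega
        rw [hfy, card_singleton]
      by_cases hAs : load x s = maxLoad x
      · have hMy' : maxLoad y' = maxLoad x + 1 := by
          apply maxLoad_eq_of
          · intro t
            by_cases h1 : t = r
            · rw [h1]; omega
            · by_cases h2 : t = s
              · rw [h2]; omega
              · by_cases h3 : t = x i
                · rw [h3]; omega
                · by_cases h4 : t = x j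
                  · rw [h4]; omega
                  · rw [hy't t h1 h2 h3 h4]
                    have := load_le_maxLoad x t
                    omega
          · exact ⟨r, by omega⟩
        have hky' : kappa B y' r = B / ((2:ℕ) : ℝ) := by
          apply kappa_eq_div B y' r hMy' (by omega)
          have hfy' : Finset.univ.filter (fun t => load y' t = maxLoad x + 1) = {r, s} := by
            ext t
            simp only [mem_filter, mem_univ, true_and, mem_insert, mem_singleton]
            constructor
            · intro ht
              by_contra hc
              push_neg at hc
              obtain ⟨h1, h2⟩ := hc
              by_cases h3 : t = x i
              · rw [h3] at ht; omega
              · by_cases h4 : t = x j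
                · rw [h4] at ht; omega
                · rw [hy't t h1 h2 h3 h4] at ht
                  have := load_le_maxLoad x t
                  omega
            · rintro (rfl | rfl)
              · omega
              · omega
          rw [hfy', card_insert_of_notMem (by simp [hrs]), card_singleton]
        rw [hky, hky']
        refine iff_of_true ?_ (Or.inl ⟨hAs, Or.inl hA⟩)
        rw [Bdiv_lt_Bdiv_iff B hB (by norm_num) (by norm_num)]
        norm_num
      · have hMy' : maxLoad y' = maxLoad x + 1 := by
          apply maxLoad_eq_of
          · intro t
            by_cases h1 : t = r
            · rw [h1]; omega
            · by_cases h2 : t = s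
              · rw [h2]; omega
              · by_cases h3 : t = x i
                · rw [h3]; omega
                · by_cases h4 : t = x j
                  · rw [h4]; omega
                  · rw [hy't t h1 h2 h3 h4]
                    have := load_le_maxLoad x t
                    omega
          · exact ⟨r, by omega⟩
        have hky' : kappa B y' r = B / ((1:ℕ) : ℝ) := by
          apply kappa_eq_div B y' r hMy' (by omega)
          have hfy' : Finset.univ.filter (fun t => load y' t = maxLoad x + 1) = {r} := by
            ext t
            simp only [mem_filter, mem_univ, true_and, mem_singleton]
            constructor
            · intro ht
              by_contra h1
              by_cases h2 : t = s
              · rw [h2] at ht; omega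
              · by_cases h3 : t = x i
                · rw [h3] at ht; omega
                · by_cases h4 : t = x j
                  · rw [h4] at ht; omega
                  · rw [hy't t h1 h2 h3 h4] at ht
                    have := load_le_maxLoad x t
                    omega
            · rintro rfl; omega
          rw [hfy', card_singleton]
        rw [hky, hky']
        refine iff_of_false (lt_irrefl _) ?_
        rintro (⟨h1, h2 | h2⟩ | ⟨h1, h2, h3⟩ | ⟨h1, h2, h3, h4⟩ | ⟨h1, h2, h3, h4⟩) <;> omega
    · by_cases hBc : load x r + 1 = maxLoad x
      · -- Branch B : load x r + 1 = M
        have hMy : maxLoad y = maxLoad x := by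
          apply maxLoad_eq_of
          · intro t
            by_cases h1 : t = r
            · rw [h1]; omega
            · by_cases h2 : t = x j
              · rw [h2]; omega
              · rw [hyt t h1 h2]
                exact load_le_maxLoad x t
          · exact ⟨r, by omega⟩
        have hfy : Finset.univ.filter (fun t => load y t = maxLoad x)
            = insert r ((Finset.univ.filter (fun t => load x t = maxLoad x)).erase (x j)) := by
          ext t
          simp only [mem_filter, mem_univ, true_and, mem_insert, mem_erase]
          by_cases h1 : t = r
          · subst h1
            constructor
            · intro _; exact Or.inl rfl
            · intro _; omega
          · by_cases h2 : t = x j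
            · constructor
              · intro ht; exfalso; rw [h2] at ht; omega
              · rintro (h | ⟨hne, -⟩)
                · exact absurd h h1
                · exact absurd h2 hne
            · rw [hyt t h1 h2]
              constructor
              · intro ht; exact Or.inr ⟨h2, ht⟩
              · rintro (h | ⟨-, hload⟩)
                · exact absurd h h1
                · exact hload
        have hrA0 : r ∉ (Finset.univ.filter (fun t => load x t = maxLoad x)).erase (x j) := by
          simp only [mem_erase, mem_filter, mem_univ, true_and]
          rintro ⟨-, h⟩; omega
        have hky : kappa B y r
            = B / ((((Finset.univ.filter (fun t => load x t = maxLoad x)).erase (x j)).card + 1 : ℕ) : ℝ) :=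
          kappa_eq_div B y r hMy (by omega) (by rw [hfy, card_insert_of_notMem hrA0])
        by_cases hBs : load x s = maxLoad x
        · -- B1 : decrease
          have hMy' : maxLoad y' = maxLoad x + 1 := by
            apply maxLoad_eq_of
            · intro t
              by_cases h1 : t = r
              · rw [h1]; omega
              · by_cases h2 : t = s
                · rw [h2]; omega
                · by_cases h3 : t = x i
                  · rw [h3]; omega
                  · by_cases h4 : t = x j
                    · rw [h4]; omega
                    · rw [hy't t h1 h2 h3 h4]
                      have := load_le_maxLoad x t
                      omega
            · exact ⟨s, by omega⟩
          have hky' : kappa B y' r = 0 := kappa_eq_zero B y' r hMy' (by omega)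
          rw [hky, hky']
          exact iff_of_true (Bdiv_pos B hB (by omega)) (Or.inl ⟨hBs, Or.inr hBc⟩)
        · -- Ls < M
          have hMy' : maxLoad y' = maxLoad x := by
            apply maxLoad_eq_of
            · intro t
              by_cases h1 : t = r
              · rw [h1]; omega
              · by_cases h2 : t = s
                · rw [h2]; omega
                · by_cases h3 : t = x i
                  · rw [h3]; omega
                  · by_cases h4 : t = x j
                    · rw [h4]; omega
                    · rw [hy't t h1 h2 h3 h4]
                      exact load_le_maxLoad x t
            · exact ⟨r, by omega⟩
          by_cases hBs1 : load x s + 1 = maxLoad x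
          · -- B2a
            have hfy' : Finset.univ.filter (fun t => load y' t = maxLoad x)
                = insert s (insert r (((Finset.univ.filter (fun t => load x t = maxLoad x)).erase (x j)).erase (x i))) := by
              ext t
              simp only [mem_filter, mem_univ, true_and, mem_insert, mem_erase]
              by_cases h1 : t = s
              · subst h1
                constructor
                · intro _; exact Or.inl rfl
                · intro _; omega
              · by_cases h2 : t = r
                · subst h2
                  constructor
                  · intro _; exact Or.inr (Or.inl rfl)
                  · intro _; omega
                · by_cases h3 : t = x i
                  · constructor
                    · intro ht; exfalso; rw [h3] at ht; omega
                    · rintro (h | h | ⟨hne, -⟩)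
                      · exact absurd h h1
                      · exact absurd h h2
                      · exact absurd h3 hne
                  · by_cases h4 : t = x j
                    · constructor
                      · intro ht; exfalso; rw [h4] at ht; omega
                      · rintro (h | h | ⟨-, hne, -⟩)
                        · exact absurd h h1
                        · exact absurd h h2
                        · exact absurd h4 hne
                    · rw [hy't t h2 h1 h3 h4]
                      constructor
                      · intro ht; exact Or.inr (Or.inr ⟨h3, h4, ht⟩)
                      · rintro (h | h | ⟨-, -, hload⟩)
                        · exact absurd h h1
                        · exact absurd h h2
                        · exact hload
            have hnots : s ∉ insert r (((Finset.univ.filter (fun t => load x t = maxLoad x)).erase (x j)).erase (x i)) := by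
              simp only [mem_insert, mem_erase, mem_filter, mem_univ, true_and]
              rintro (h | ⟨-, -, h⟩)
              · exact hrs h.symm
              · omega
            have hnotr : r ∉ ((Finset.univ.filter (fun t => load x t = maxLoad x)).erase (x j)).erase (x i) := by
              simp only [mem_erase, mem_filter, mem_univ, true_and]
              rintro ⟨-, -, h⟩; omega
            by_cases hLiM' : load x (x i) = maxLoad x
            · have hmem : x i ∈ (Finset.univ.filter (fun t => load x t = maxLoad x)).erase (x j) := by
                simp only [mem_erase, mem_filter, mem_univ, true_and]
                exact ⟨Ne.symm hj1, hLiM'⟩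
              have hpos : 1 ≤ ((Finset.univ.filter (fun t => load x t = maxLoad x)).erase (x j)).card :=
                card_pos.mpr ⟨x i, hmem⟩
              have hky' : kappa B y' r
                  = B / ((((Finset.univ.filter (fun t => load x t = maxLoad x)).erase (x j)).card - 1 + 1 + 1 : ℕ) : ℝ) :=
                kappa_eq_div B y' r hMy' (by omega)
                  (by rw [hfy', card_insert_of_notMem hnots, card_insert_of_notMem hnotr,
                        card_erase_of_mem hmem])
              rw [hky, hky', Bdiv_lt_Bdiv_iff B hB (by omega) (by omega)]
              refine iff_of_false (by omega) ?_
              rintro (⟨h1, h2 | h2⟩ | ⟨h1, h2, h3⟩ | ⟨h1, h2, h3, h4⟩ | ⟨h1, h2, h3, h4⟩) <;> omega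
            · have hnotmem : x i ∉ (Finset.univ.filter (fun t => load x t = maxLoad x)).erase (x j) := by
                simp only [mem_erase, mem_filter, mem_univ, true_and]
                rintro ⟨-, h⟩; exact hLiM' h
              have hky' : kappa B y' r
                  = B / ((((Finset.univ.filter (fun t => load x t = maxLoad x)).erase (x j)).card + 1 + 1 : ℕ) : ℝ) :=
                kappa_eq_div B y' r hMy' (by omega)
                  (by rw [hfy', card_insert_of_notMem hnots, card_insert_of_notMem hnotr,
                        erase_eq_of_notMem hnotmem])
              rw [hky, hky', Bdiv_lt_Bdiv_iff B hB (by omega) (by omega)]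
              refine iff_of_true (by omega) ?_
              refine Or.inr (Or.inl ⟨by omega, hBs1, hBc⟩)
          · -- B2b : no decrease
            have hfy' : Finset.univ.filter (fun t => load y' t = maxLoad x)
                = insert r (((Finset.univ.filter (fun t => load x t = maxLoad x)).erase (x j)).erase (x i)) := by
              ext t
              simp only [mem_filter, mem_univ, true_and, mem_insert, mem_erase]
              by_cases h1 : t = r
              · subst h1
                constructor
                · intro _; exact Or.inl rfl
                · intro _; omega
              · by_cases h2 : t = s
                · constructor
                  · intro ht; exfalso; rw [h2] at ht; omega
                  · rintro (h | ⟨-, -, h⟩)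
                    · exact absurd h h1
                    · exfalso; rw [h2] at h; omega
                · by_cases h3 : t = x i
                  · constructor
                    · intro ht; exfalso; rw [h3] at ht; omega
                    · rintro (h | ⟨hne, -⟩)
                      · exact absurd h h1
                      · exact absurd h3 hne
                  · by_cases h4 : t = x j
                    · constructor
                      · intro ht; exfalso; rw [h4] at ht; omega
                      · rintro (h | ⟨-, hne, -⟩)
                        · exact absurd h h1
                        · exact absurd h4 hne
                    · rw [hy't t h1 h2 h3 h4]
                      constructor
                      · intro ht; exact Or.inr ⟨h3, h4, ht⟩
                      · rintro (h | ⟨-, -, hload⟩)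
                        · exact absurd h h1
                        · exact hload
            have hnotr : r ∉ ((Finset.univ.filter (fun t => load x t = maxLoad x)).erase (x j)).erase (x i) := by
              simp only [mem_erase, mem_filter, mem_univ, true_and]
              rintro ⟨-, -, h⟩; omega
            have hle : (((Finset.univ.filter (fun t => load x t = maxLoad x)).erase (x j)).erase (x i)).card
                ≤ ((Finset.univ.filter (fun t => load x t = maxLoad x)).erase (x j)).card :=
              card_erase_le
            have hky' : kappa B y' r
                = B / (((((Finset.univ.filter (fun t => load x t = maxLoad x)).erase (x j)).erase (x i)).card + 1 : ℕ) : ℝ) :=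
              kappa_eq_div B y' r hMy' (by omega)
                (by rw [hfy', card_insert_of_notMem hnotr])
            rw [hky, hky', Bdiv_lt_Bdiv_iff B hB (by omega) (by omega)]
            refine iff_of_false (by omega) ?_
            rintro (⟨h1, h2 | h2⟩ | ⟨h1, h2, h3⟩ | ⟨h1, h2, h3, h4⟩ | ⟨h1, h2, h3, h4⟩) <;> omega
      · -- Branch C : load x r + 1 < M
        by_cases hOM : onlyMax x (x j)
        · -- C1 : x j is the unique maximum
          have hLjeq : load x (x j) = maxLoad x := hOM.1
          have hOnly : ∀ t, t ≠ x j → load x t + 1 ≤ maxLoad x := by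
            intro t ht
            have h := load_le_maxLoad x t
            by_cases h2 : load x t = maxLoad x
            · exact absurd (hOM.2 t h2) ht
            · omega
          have hLi' := hOnly (x i) (Ne.symm hj1)
          have hLs' := hOnly s (Ne.symm hj2)
          have hLr' := hOnly r hrj
          have hMy : maxLoad y = maxLoad x - 1 := by
            apply maxLoad_eq_of
            · intro t
              by_cases h1 : t = r
              · rw [h1]; omega
              · by_cases h2 : t = x j
                · rw [h2]; omega
                · rw [hyt t h1 h2]
                  have := hOnly t h2
                  omega
            · exact ⟨x j, by omega⟩
          by_cases hC2 : load x r + 2 = maxLoad x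
          · -- C1a : load x r = M - 2
            have hfy : Finset.univ.filter (fun t => load y t = maxLoad x - 1)
                = insert r (insert (x j) (Finset.univ.filter (fun t => load x t = maxLoad x - 1))) := by
              ext t
              simp only [mem_filter, mem_univ, true_and, mem_insert]
              by_cases h1 : t = r
              · subst h1
                constructor
                · intro _; exact Or.inl rfl
                · intro _; omega
              · by_cases h2 : t = x j
                · constructor
                  · intro _; exact Or.inr (Or.inl h2)
                  · intro _; rw [h2]; omega
                · rw [hyt t h1 h2]
                  constructor
                  · intro ht; exact Or.inr (Or.inr ht)
                  · rintro (h | h | h)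
                    · exact absurd h h1
                    · exact absurd h h2
                    · exact h
            have hnot1 : r ∉ insert (x j) (Finset.univ.filter (fun t => load x t = maxLoad x - 1)) := by
              simp only [mem_insert, mem_filter, mem_univ, true_and]
              rintro (h | h)
              · exact hrj h
              · omega
            have hnot2 : x j ∉ Finset.univ.filter (fun t => load x t = maxLoad x - 1) := by
              simp only [mem_filter, mem_univ, true_and]
              omega
            have hky : kappa B y r
                = B / (((Finset.univ.filter (fun t => load x t = maxLoad x - 1)).card + 1 + 1 : ℕ) : ℝ) :=
              kappa_eq_div B y r hMy (by omega)
                (by rw [hfy, card_insert_of_notMem hnot1, card_insert_of_notMem hnot2])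
            by_cases hCs1 : load x s + 1 = maxLoad x
            · -- C1a-i : decrease
              have hMy' : maxLoad y' = maxLoad x := by
                apply maxLoad_eq_of
                · intro t
                  by_cases h1 : t = r
                  · rw [h1]; omega
                  · by_cases h2 : t = s
                    · rw [h2]; omega
                    · by_cases h3 : t = x i
                      · rw [h3]; omega
                      · by_cases h4 : t = x j
                        · rw [h4]; omega
                        · rw [hy't t h1 h2 h3 h4]
                          exact load_le_maxLoad x t
                · exact ⟨s, by omega⟩
              have hky' : kappa B y' r = 0 := kappa_eq_zero B y' r hMy' (by omega)
              rw [hky, hky']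
              exact iff_of_true (Bdiv_pos B hB (by omega))
                (Or.inr (Or.inr (Or.inl ⟨by omega, hCs1, hC2, hOM⟩)))
            · -- load x s + 1 < M
              have hMy' : maxLoad y' = maxLoad x - 1 := by
                apply maxLoad_eq_of
                · intro t
                  by_cases h1 : t = r
                  · rw [h1]; omega
                  · by_cases h2 : t = s
                    · rw [h2]; omega
                    · by_cases h3 : t = x i
                      · rw [h3]; omega
                      · by_cases h4 : t = x j
                        · rw [h4]; omega
                        · rw [hy't t h1 h2 h3 h4]
                          have := hOnly t h4
                          omega
                · exact ⟨r, by omega⟩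
              by_cases hCs2 : load x s + 2 = maxLoad x
              · -- C1a-ii with load x s = M - 2
                have hfy' : Finset.univ.filter (fun t => load y' t = maxLoad x - 1)
                    = insert s (insert r (insert (x j)
                        ((Finset.univ.filter (fun t => load x t = maxLoad x - 1)).erase (x i)))) := by
                  ext t
                  simp only [mem_filter, mem_univ, true_and, mem_insert, mem_erase]
                  by_cases h1 : t = s
                  · subst h1
                    constructor
                    · intro _; exact Or.inl rfl
                    · intro _; omega
                  · by_cases h2 : t = r
                    · subst h2
                      constructor
                      · intro _; exact Or.inr (Or.inl rfl)
                      · intro _; omega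
                    · by_cases h3 : t = x i
                      · constructor
                        · intro ht; exfalso; rw [h3] at ht; omega
                        · rintro (h | h | h | ⟨hne, -⟩)
                          · exact absurd h h1
                          · exact absurd h h2
                          · exfalso; rw [h3] at h; exact hj1 h.symm
                          · exact absurd h3 hne
                      · by_cases h4 : t = x j
                        · constructor
                          · intro _; exact Or.inr (Or.inr (Or.inl h4))
                          · intro _; rw [h4]; omega
                        · rw [hy't t h2 h1 h3 h4]
                          constructor
                          · intro ht; exact Or.inr (Or.inr (Or.inr ⟨h3, ht⟩))
                          · rintro (h | h | h | ⟨-, hload⟩)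
                            · exact absurd h h1
                            · exact absurd h h2
                            · exact absurd h h4
                            · exact hload
                have hnots : s ∉ insert r (insert (x j)
                    ((Finset.univ.filter (fun t => load x t = maxLoad x - 1)).erase (x i))) := by
                  simp only [mem_insert, mem_erase, mem_filter, mem_univ, true_and]
                  rintro (h | h | ⟨-, h⟩)
                  · exact hrs h.symm
                  · exact hj2 h.symm
                  · omega
                have hnotr : r ∉ insert (x j)
                    ((Finset.univ.filter (fun t => load x t = maxLoad x - 1)).erase (x i)) := by
                  simp only [mem_insert, mem_erase, mem_filter, mem_univ, true_and]
                  rintro (h | ⟨-, h⟩)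
                  · exact hrj h
                  · omega
                have hnotj : x j ∉ (Finset.univ.filter (fun t => load x t = maxLoad x - 1)).erase (x i) := by
                  simp only [mem_erase, mem_filter, mem_univ, true_and]
                  rintro ⟨-, h⟩; omega
                by_cases hLiM1 : load x (x i) = maxLoad x - 1
                · have hmem : x i ∈ Finset.univ.filter (fun t => load x t = maxLoad x - 1) := by
                    simp only [mem_filter, mem_univ, true_and]; exact hLiM1
                  have hpos : 1 ≤ (Finset.univ.filter (fun t => load x t = maxLoad x - 1)).card :=
                    card_pos.mpr ⟨x i, hmem⟩
                  have hky' : kappa B y' r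
                      = B / (((Finset.univ.filter (fun t => load x t = maxLoad x - 1)).card - 1 + 1 + 1 + 1 : ℕ) : ℝ) :=
                    kappa_eq_div B y' r hMy' (by omega)
                      (by rw [hfy', card_insert_of_notMem hnots, card_insert_of_notMem hnotr,
                            card_insert_of_notMem hnotj, card_erase_of_mem hmem])
                  rw [hky, hky', Bdiv_lt_Bdiv_iff B hB (by omega) (by omega)]
                  refine iff_of_false (by omega) ?_
                  rintro (⟨h1, h2 | h2⟩ | ⟨h1, h2, h3⟩ | ⟨h1, h2, h3, h4⟩ | ⟨h1, h2, h3, h4⟩) <;> omega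
                · have hnotmem : x i ∉ Finset.univ.filter (fun t => load x t = maxLoad x - 1) := by
                    simp only [mem_filter, mem_univ, true_and]; exact hLiM1
                  have hky' : kappa B y' r
                      = B / (((Finset.univ.filter (fun t => load x t = maxLoad x - 1)).card + 1 + 1 + 1 : ℕ) : ℝ) :=
                    kappa_eq_div B y' r hMy' (by omega)
                      (by rw [hfy', card_insert_of_notMem hnots, card_insert_of_notMem hnotr,
                            card_insert_of_notMem hnotj, erase_eq_of_notMem hnotmem])
                  rw [hky, hky', Bdiv_lt_Bdiv_iff B hB (by omega) (by omega)]
                  refine iff_of_true (by omega) ?_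
                  exact Or.inr (Or.inr (Or.inr ⟨by omega, hCs2, hC2, hOM⟩))
              · -- C1a-ii with load x s + 2 < M : no decrease
                have hfy' : Finset.univ.filter (fun t => load y' t = maxLoad x - 1)
                    = insert r (insert (x j)
                        ((Finset.univ.filter (fun t => load x t = maxLoad x - 1)).erase (x i))) := by
                  ext t
                  simp only [mem_filter, mem_univ, true_and, mem_insert, mem_erase]
                  by_cases h1 : t = r
                  · subst h1
                    constructor
                    · intro _; exact Or.inl rfl
                    · intro _; omega
                  · by_cases h2 : t = s
                    · constructor
                      · intro ht; exfalso; rw [h2] at ht; omega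
                      · rintro (h | h | ⟨-, h⟩)
                        · exact absurd h h1
                        · exfalso; rw [h2] at h; exact hj2 h.symm
                        · exfalso; rw [h2] at h; omega
                    · by_cases h3 : t = x i
                      · constructor
                        · intro ht; exfalso; rw [h3] at ht; omega
                        · rintro (h | h | ⟨hne, -⟩)
                          · exact absurd h h1
                          · exfalso; rw [h3] at h; exact hj1 h.symm
                          · exact absurd h3 hne
                      · by_cases h4 : t = x j
                        · constructor
                          · intro _; exact Or.inr (Or.inl h4)
                          · intro _; rw [h4]; omega
                        · rw [hy't t h1 h2 h3 h4]
                          constructor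
                          · intro ht; exact Or.inr (Or.inr ⟨h3, ht⟩)
                          · rintro (h | h | ⟨-, hload⟩)
                            · exact absurd h h1
                            · exact absurd h h4
                            · exact hload
                have hnotr : r ∉ insert (x j)
                    ((Finset.univ.filter (fun t => load x t = maxLoad x - 1)).erase (x i)) := by
                  simp only [mem_insert, mem_erase, mem_filter, mem_univ, true_and]
                  rintro (h | ⟨-, h⟩)
                  · exact hrj h
                  · omega
                have hnotj : x j ∉ (Finset.univ.filter (fun t => load x t = maxLoad x - 1)).erase (x i) := by
                  simp only [mem_erase, mem_filter, mem_univ, true_and]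
                  rintro ⟨-, h⟩; omega
                have hle : ((Finset.univ.filter (fun t => load x t = maxLoad x - 1)).erase (x i)).card
                    ≤ (Finset.univ.filter (fun t => load x t = maxLoad x - 1)).card := card_erase_le
                have hky' : kappa B y' r
                    = B / ((((Finset.univ.filter (fun t => load x t = maxLoad x - 1)).erase (x i)).card + 1 + 1 : ℕ) : ℝ) :=
                  kappa_eq_div B y' r hMy' (by omega)
                    (by rw [hfy', card_insert_of_notMem hnotr, card_insert_of_notMem hnotj])
                rw [hky, hky', Bdiv_lt_Bdiv_iff B hB (by omega) (by omega)]
                refine iff_of_false (by omega) ?_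
                rintro (⟨h1, h2 | h2⟩ | ⟨h1, h2, h3⟩ | ⟨h1, h2, h3, h4⟩ | ⟨h1, h2, h3, h4⟩) <;> omega
          · -- C1b : load x r + 2 ≠ M, kappa of r in y is 0
            have hky : kappa B y r = 0 := kappa_eq_zero B y r hMy (by omega)
            rw [hky]
            refine iff_of_false (not_lt.mpr (kappa_nonneg B hB y' r)) ?_
            rintro (⟨h1, h2 | h2⟩ | ⟨h1, h2, h3⟩ | ⟨h1, h2, h3, h4⟩ | ⟨h1, h2, h3, h4⟩) <;> omega
        · -- C0 : not onlyMax
          have hex : ∃ t, t ≠ x j ∧ load x t = maxLoad x := by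
            by_cases hLjx : load x (x j) = maxLoad x
            · have h2 : ¬ ∀ t, load x t = maxLoad x → t = x j := fun h => hOM ⟨hLjx, h⟩
              push_neg at h2
              obtain ⟨t, ht1, ht2⟩ := h2
              exact ⟨t, ht2, ht1⟩
            · obtain ⟨t, ht⟩ := exists_maxLoad x r
              exact ⟨t, fun h => hLjx (h ▸ ht), ht⟩
          obtain ⟨t0, ht0j, ht0⟩ := hex
          have ht0r : t0 ≠ r := by rintro rfl; omega
          have hMy : maxLoad y = maxLoad x := by
            apply maxLoad_eq_of
            · intro t
              by_cases h1 : t = r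
              · rw [h1]; omega
              · by_cases h2 : t = x j
                · rw [h2]; omega
                · rw [hyt t h1 h2]
                  exact load_le_maxLoad x t
            · exact ⟨t0, by rw [hyt t0 ht0r ht0j]; exact ht0⟩
          have hky : kappa B y r = 0 := kappa_eq_zero B y r hMy (by omega)
          rw [hky]
          refine iff_of_false (not_lt.mpr (kappa_nonneg B hB y' r)) ?_
          rintro (⟨h1, h2 | h2⟩ | ⟨h1, h2, h3⟩ | ⟨h1, h2, h3, h4⟩ | ⟨h1, h2, h3, h4⟩)
          · omega
          · omega
          · omega
          · exact hOM h4
          · exact hOM h4
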